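/- arXiv:2511.07735 — 3 statements merged into one kernel-verified Lean document; each statement's English description precedes it below -/
import Mathlib

section
/- Fix 0 < ε_g < 1/2 and 0 < a₁ < a₂. There exist c > 0 and N₀ such that for all integers n, all reals N ≥ N₀, and all x with a₁·N ≤ x ≤ a₂·N and x ≤ n^{1/2} − N^{ε_g}, the 2×2 matrix V_n(x) with entries V₁₁ = (1/N)·∑_{i=1}^n b_i(x)², V₁₂ = V₂₁ = (1/N)·∑_{i=1}^n b_i(x)·c_i(x), V₂₂ = (1/N)·∑_{i=1}^n c_i(x)² satisfies: every entry of V_n(x) − I₂ has absolute value at most exp(−N^{c}). -/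
open Real

/-- `b_i(x) = √N e^{−x²/2} x^i / √(i!)`. -/
noncomputable def bW (N : ℝ) (i : ℕ) (x : ℝ) : ℝ :=
  Real.sqrt N * Real.exp (-x ^ 2 / 2) * x ^ i / Real.sqrt (Nat.factorial i)

/-- `c_i(x) = b_i'(x) = √N e^{−x²/2} ((i − x²)/x) x^i / √(i!)`. -/
noncomputable def cW (N : ℝ) (i : ℕ) (x : ℝ) : ℝ :=
  Real.sqrt N * Real.exp (-x ^ 2 / 2) * (((i : ℝ) - x ^ 2) / x) * x ^ i /
    Real.sqrt (Nat.factorial i)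

/-!
`b_i(x)² / N` is the `Poisson(x²)` probability of `i`, and `c_i = b_i · (i - x²) / x`. Hence the
entries of `V_n(x)` are the moments `E[Z^k]`, `k = 0, 1, 2`, of `Z = (K - x²) / x` with
`K ~ Poisson(x²)`, truncated to `1 ≤ K ≤ n`; without truncation they are `1, 0, 1`. Falling
factorial moments of `K` give the truncated sums in closed form, so the error is controlled by
`P(K = 0) = e^{-x²}` and by the Chernoff bound `P(K ≥ n - 1) ≤ exp(-N^{2ε_g} / 4)`, which holds
because `n ≥ (x + N^{ε_g})²`. For `x ≍ N` both are far below `exp(-N^{ε_g})`.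
-/

open Finset Filter
open scoped Nat

lemma sum_Icc_one_eq_sum_range_sub {G : Type*} [AddCommGroup G] (f : ℕ → G) (n : ℕ) :
    ∑ i ∈ Icc 1 n, f i = ∑ i ∈ range (n + 1), f i - f 0 := by
  rw [range_eq_Ico, sum_eq_sum_Ico_succ_bot (by omega : 0 < n + 1), zero_add,
    Ico_add_one_right_eq_Icc, add_sub_cancel_left]

section Poisson

variable (l : ℝ)

noncomputable def poissonWeight (i : ℕ) : ℝ := exp (-l) * l ^ i / i !

/-- `P(K ≥ m)` for `K ~ Poisson(l)`. -/
noncomputable def poissonTail (m : ℕ) : ℝ := 1 - ∑ i ∈ range m, poissonWeight l i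

lemma hasSum_poissonWeight : HasSum (poissonWeight l) 1 := by
  convert! (NormedSpace.expSeries_div_hasSum_exp l).mul_left (exp (-l)) using 1
  · exact funext fun i => mul_div_assoc _ _ _
  · rw [← exp_eq_exp_ℝ, ← exp_add, neg_add_cancel, exp_zero]

lemma succ_mul_poissonWeight_succ (i : ℕ) :
    (i + 1 : ℝ) * poissonWeight l (i + 1) = l * poissonWeight l i := by
  simp only [poissonWeight, Nat.factorial_succ]
  push_cast
  field_simp
  ring

lemma poissonTail_eq_tsum (m : ℕ) : poissonTail l m = ∑' i, poissonWeight l (i + m) := by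
  rw [poissonTail, ← (hasSum_poissonWeight l).tsum_eq,
    ← (hasSum_poissonWeight l).summable.sum_add_tsum_nat_add m, add_sub_cancel_left]

variable {l}

lemma poissonWeight_nonneg (hl : 0 ≤ l) (i : ℕ) : 0 ≤ poissonWeight l i := by
  unfold poissonWeight; positivity

lemma poissonTail_nonneg (hl : 0 ≤ l) (m : ℕ) : 0 ≤ poissonTail l m := by
  rw [poissonTail_eq_tsum]
  exact tsum_nonneg fun i => poissonWeight_nonneg hl _

lemma poissonTail_le_one (hl : 0 ≤ l) (m : ℕ) : poissonTail l m ≤ 1 :=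
  sub_le_self _ (sum_nonneg fun i _ => poissonWeight_nonneg hl i)

lemma poissonTail_antitone (hl : 0 ≤ l) : Antitone (poissonTail l) := fun _ _ h =>
  sub_le_sub_left (sum_le_sum_of_subset_of_nonneg (range_subset_range.2 h)
    fun i _ _ => poissonWeight_nonneg hl i) 1

/-- Exponential tilting: `Poisson(l)` reweighted by `e^{tj}` is `Poisson(l e^t)`. -/
lemma poissonWeight_eq_exp_mul (t : ℝ) (j : ℕ) :
    poissonWeight l j = exp (l * (exp t - 1) - t * j) * poissonWeight (l * exp t) j := by
  have : exp (-l) = exp (l * (exp t - 1) - t * j) * exp (-(l * exp t)) * exp (j * t) := by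
    rw [← exp_add, ← exp_add]; ring_nf
  simp only [poissonWeight, mul_pow, ← exp_nat_mul, this]
  ring

lemma poissonTail_le_exp (hl : 0 ≤ l) {t : ℝ} (ht : 0 ≤ t) (m : ℕ) :
    poissonTail l m ≤ exp (l * (exp t - 1) - t * m) := by
  have hlt : 0 ≤ l * exp t := by positivity
  have summable (l' : ℝ) : Summable fun i => poissonWeight l' (i + m) :=
    (summable_nat_add_iff m).2 (hasSum_poissonWeight l').summable
  calc poissonTail l m
      ≤ ∑' i, exp (l * (exp t - 1) - t * m) * poissonWeight (l * exp t) (i + m) := by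
        rw [poissonTail_eq_tsum]
        refine Summable.tsum_le_tsum (fun i => ?_) (summable l) ((summable _).mul_left _)
        rw [poissonWeight_eq_exp_mul t]
        gcongr
        · exact poissonWeight_nonneg hlt _
        · linarith
    _ = exp (l * (exp t - 1) - t * m) * poissonTail (l * exp t) m := by
        rw [tsum_mul_left, poissonTail_eq_tsum]
    _ ≤ exp (l * (exp t - 1) - t * m) :=
        mul_le_of_le_one_right (exp_pos _).le (poissonTail_le_one hlt m)

lemma poissonTail_le_exp_neg_sq (hl : 0 ≤ l) {u : ℝ} (hu₀ : 0 ≤ u) (hu₂ : u ≤ 2) {m : ℕ}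
    (hm : l * (1 + u) ≤ m) : poissonTail l m ≤ exp (-(l * u ^ 2 / 4)) := by
  have hexp : exp (u / 2) - 1 ≤ u / 2 + (u / 2) ^ 2 := by
    have := abs_exp_sub_one_sub_id_le (x := u / 2) (by rw [abs_le]; constructor <;> linarith)
    linarith [le_abs_self (exp (u / 2) - 1 - u / 2)]
  refine (poissonTail_le_exp hl (t := u / 2) (by positivity) m).trans (exp_le_exp.2 ?_)
  nlinarith [mul_le_mul_of_nonneg_left hexp hl,
    mul_le_mul_of_nonneg_left hm (by positivity : 0 ≤ u / 2)]

lemma sum_range_mul_poissonWeight (m : ℕ) :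
    ∑ i ∈ range m, (i : ℝ) * poissonWeight l i
      = l * ∑ i ∈ range (m - 1), poissonWeight l i := by
  cases m with
  | zero => simp
  | succ k =>
    rw [sum_range_succ', mul_sum]
    simp [succ_mul_poissonWeight_succ]

lemma sum_range_mul_sub_one_mul_poissonWeight (m : ℕ) :
    ∑ i ∈ range m, (i : ℝ) * (i - 1) * poissonWeight l i
      = l ^ 2 * ∑ i ∈ range (m - 2), poissonWeight l i := by
  cases m with
  | zero => simp
  | succ k =>
    have h (i : ℕ) : ((i + 1 : ℕ) : ℝ) * ((i + 1 : ℕ) - 1) * poissonWeight l (i + 1)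
        = l * (i * poissonWeight l i) := by
      push_cast
      rw [add_sub_cancel_right, mul_comm _ (i : ℝ), mul_assoc, succ_mul_poissonWeight_succ]
      ring
    rw [sum_range_succ', sum_congr rfl fun i _ => h i, ← mul_sum, sum_range_mul_poissonWeight]
    simp [sq, mul_assoc]

lemma sum_range_poissonWeight (m : ℕ) :
    ∑ i ∈ range m, poissonWeight l i = 1 - poissonTail l m :=
  (sub_sub_cancel _ _).symm

lemma poissonWeight_zero : poissonWeight l 0 = exp (-l) := by simp [poissonWeight]

lemma sum_Icc_poissonWeight (n : ℕ) :
    ∑ i ∈ Icc 1 n, poissonWeight l i = 1 - exp (-l) - poissonTail l (n + 1) := by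
  rw [sum_Icc_one_eq_sum_range_sub, sum_range_poissonWeight, poissonWeight_zero]
  ring

lemma sum_Icc_sub_mul_poissonWeight (n : ℕ) :
    ∑ i ∈ Icc 1 n, (i - l) * poissonWeight l i
      = l * (poissonTail l (n + 1) - poissonTail l n + exp (-l)) := by
  simp only [sub_mul, sum_sub_distrib, ← mul_sum, sum_Icc_poissonWeight]
  rw [sum_Icc_one_eq_sum_range_sub, sum_range_mul_poissonWeight, sum_range_poissonWeight,
    Nat.add_sub_cancel]
  simp only [CharP.cast_eq_zero, zero_mul, sub_zero]
  ring

lemma sum_Icc_sub_sq_mul_poissonWeight (n : ℕ) :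
    ∑ i ∈ Icc 1 n, (i - l) ^ 2 * poissonWeight l i
      = l - l ^ 2 * poissonTail l (n - 1) - l * (1 - 2 * l) * poissonTail l n
        - l ^ 2 * poissonTail l (n + 1) - l ^ 2 * exp (-l) := by
  have h (i : ℕ) : ((i : ℝ) - l) ^ 2 * poissonWeight l i = i * (i - 1) * poissonWeight l i
      + (1 - 2 * l) * (i * poissonWeight l i) + l ^ 2 * poissonWeight l i := by ring
  simp only [h, sum_add_distrib, ← mul_sum, sum_Icc_poissonWeight]
  rw [sum_Icc_one_eq_sum_range_sub, sum_Icc_one_eq_sum_range_sub,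
    sum_range_mul_sub_one_mul_poissonWeight, sum_range_mul_poissonWeight, sum_range_poissonWeight,
    sum_range_poissonWeight, Nat.add_sub_cancel, show n + 1 - 2 = n - 1 by omega]
  simp only [CharP.cast_eq_zero, zero_sub, mul_neg, mul_one, neg_zero, zero_mul, sub_zero]
  ring

end Poisson

section Weyl

variable {N x : ℝ}

noncomputable def weylVec (N x : ℝ) : Fin 2 → ℕ → ℝ := ![fun i => bW N i x, fun i => cW N i x]

/-- `V_n(x)`. -/
noncomputable def weylCov (N : ℝ) (n : ℕ) (x : ℝ) : Matrix (Fin 2) (Fin 2) ℝ :=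
  Matrix.of fun p q => (1 / N) * ∑ i ∈ Icc 1 n, weylVec N x p i * weylVec N x q i

lemma bW_mul_self (hN : 0 ≤ N) (i : ℕ) : bW N i x * bW N i x = N * poissonWeight (x ^ 2) i := by
  simp only [bW, poissonWeight]
  field_simp
  rw [sq_sqrt hN, sq_sqrt (Nat.cast_nonneg _), ← exp_nat_mul]
  ring_nf

lemma cW_eq_bW_mul (i : ℕ) : cW N i x = bW N i x * ((i - x ^ 2) / x) := by
  simp only [bW, cW]
  ring

lemma weylVec_apply (p : Fin 2) (i : ℕ) :
    weylVec N x p i = bW N i x * ((i - x ^ 2) / x) ^ (p : ℕ) := by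
  fin_cases p <;> simp [weylVec, cW_eq_bW_mul]

lemma weylCov_apply (hN : 0 < N) (n : ℕ) (p q : Fin 2) :
    weylCov N n x p q
      = (∑ i ∈ Icc 1 n, (i - x ^ 2) ^ (p + q : ℕ) * poissonWeight (x ^ 2) i)
          / x ^ (p + q : ℕ) := by
  simp only [weylCov, Matrix.of_apply, weylVec_apply, mul_sum, sum_div]
  refine sum_congr rfl fun i _ => ?_
  rw [mul_mul_mul_comm, bW_mul_self hN.le, ← pow_add, div_pow]
  field_simp

lemma abs_weylCov_sub_one_le (hN : 0 < N) (hx : 1 ≤ x) (n : ℕ) (p q : Fin 2) :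
    |(weylCov N n x - 1) p q| ≤ 5 * x ^ 2 * (poissonTail (x ^ 2) (n - 1) + exp (-x ^ 2)) := by
  have hl : 0 ≤ x ^ 2 := by positivity
  have hx₀ : 0 ≤ x := by linarith
  have hxl : x ≤ x ^ 2 := by nlinarith
  have hlx : x ^ 2 / x = x := by field_simp
  have he := (exp_pos (-x ^ 2)).le
  have h_succ : poissonTail (x ^ 2) (n + 1) ≤ poissonTail (x ^ 2) (n - 1) :=
    poissonTail_antitone hl (by omega)
  have h_self : poissonTail (x ^ 2) n ≤ poissonTail (x ^ 2) (n - 1) :=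
    poissonTail_antitone hl (by omega)
  have hT_succ := poissonTail_nonneg hl (n + 1)
  have hT_self := poissonTail_nonneg hl n
  have hT_pred := poissonTail_nonneg hl (n - 1)
  rw [Matrix.sub_apply, weylCov_apply hN]
  fin_cases p <;> fin_cases q <;> simp only [Fin.zero_eta,
    Fin.mk_one, Fin.isValue, Nat.reduceAdd, add_zero, zero_add, pow_zero, pow_one, one_mul,
    div_one, sub_zero, ne_eq, zero_ne_one, one_ne_zero, not_false_eq_true, Matrix.one_apply_eq,
    Matrix.one_apply_ne, sum_Icc_poissonWeight, sum_Icc_sub_mul_poissonWeight,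
    sum_Icc_sub_sq_mul_poissonWeight]
  · rw [abs_le]; constructor <;> nlinarith
  iterate 2
    rw [mul_div_right_comm, hlx, abs_le]
    constructor <;> nlinarith [mul_nonneg (sub_nonneg.2 hxl) (add_nonneg hT_pred he),
      mul_le_mul_of_nonneg_left h_succ hx₀, mul_nonneg hx₀ hT_self, mul_nonneg hx₀ he,
      mul_nonneg hx₀ hT_succ]
  · field_simp
    rw [abs_le]; constructor <;> nlinarith

end Weyl

lemma poissonTail_sq_sub_one_le {x s : ℝ} {n : ℕ} (hs : 0 ≤ s) (hsx : s ≤ 2 * x)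
    (hxs : 1 ≤ x * s) (hn : x + s ≤ √n) : poissonTail (x ^ 2) (n - 1) ≤ exp (-(s ^ 2 / 4)) := by
  have hx : 0 < x := by nlinarith
  have hn' : (x + s) ^ 2 ≤ n := (le_sqrt (by linarith) (by positivity)).1 hn
  have h1n : 1 ≤ n := by exact_mod_cast (by nlinarith : (1 : ℝ) ≤ n)
  have h := poissonTail_le_exp_neg_sq (l := x ^ 2) (u := s / x) (m := n - 1) (by positivity)
    (by positivity) ((div_le_iff₀ hx).2 (by linarith)) (by
      rw [Nat.cast_sub h1n, mul_one_add, sq, mul_assoc, mul_div_cancel₀ _ hx.ne']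
      push_cast
      nlinarith)
  convert h using 3
  field_simp

lemma eventually_rpow_le_mul {ε a : ℝ} (hε : ε < 1) (ha : 0 < a) :
    ∀ᶠ N : ℝ in atTop, N ^ ε ≤ a * N := by
  filter_upwards [(tendsto_rpow_neg_atTop (sub_pos.2 hε)).eventually (ge_mem_nhds ha),
    eventually_gt_atTop 0] with N hN hN₀
  calc N ^ ε = N ^ (-(1 - ε)) * N := by rw [← rpow_add_one hN₀.ne']; ring_nf
    _ ≤ a * N := by gcongr

lemma eventually_mul_sq_mul_exp_le_exp {ε : ℝ} (hε : 0 < ε) (a : ℝ) :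
    ∀ᶠ N : ℝ in atTop, 10 * (a * N) ^ 2 * exp (N ^ ε) ≤ exp ((N ^ ε) ^ 2 / 4) := by
  set C := 10 * a ^ 2 + 1 with hC_def
  filter_upwards [eventually_ge_atTop 1, (tendsto_rpow_atTop hε).eventually_ge_atTop
    (4 * (2 / ε + 1) + 4 * |log C| + 1)] with N hN hs
  set s := N ^ ε
  have hC : 0 < C := by positivity
  have hs₁ : 1 ≤ s := one_le_rpow hN hε.le
  have hlog : log N ≤ s / ε := log_le_rpow_div (by linarith) hε
  have hsε : 2 * (s / ε) = 2 / ε * s := by ring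
  calc 10 * (a * N) ^ 2 * exp s ≤ C * N ^ 2 * exp s := by
        gcongr ?_ * _
        nlinarith [sq_nonneg N]
    _ = exp (log C + (log N + log N) + s) := by
        rw [exp_add, exp_add, exp_add, exp_log hC, exp_log (by linarith)]; ring
    _ ≤ exp (s ^ 2 / 4) := exp_le_exp.2 (by
        nlinarith [mul_le_mul_of_nonneg_left hs (by linarith : (0 : ℝ) ≤ s),
          le_mul_of_one_le_left (abs_nonneg (log C)) hs₁,
          le_abs_self (log C), div_pos two_pos hε])

lemma mul_add_exp_neg_le_exp_neg {l s L : ℝ} (hsl : s ^ 2 / 4 ≤ l) (hlL : l ≤ L)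
    (h : 10 * L * exp s ≤ exp (s ^ 2 / 4)) :
    5 * l * (exp (-(s ^ 2 / 4)) + exp (-l)) ≤ exp (-s) := by
  have hl : 0 ≤ l := le_trans (by positivity) hsl
  calc 5 * l * (exp (-(s ^ 2 / 4)) + exp (-l))
      ≤ 5 * l * (exp (-(s ^ 2 / 4)) + exp (-(s ^ 2 / 4))) := by gcongr
    _ ≤ 10 * L * exp (-(s ^ 2 / 4)) := by nlinarith [exp_pos (-(s ^ 2 / 4))]
    _ ≤ exp (-s) := by
        rw [exp_neg, exp_neg, ← div_eq_mul_inv, div_le_iff₀ (exp_pos _)]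
        field_simp
        linarith

theorem weyl_covariance_two_dim_general
    (εg a₁ a₂ : ℝ) (hε0 : 0 < εg) (hε : εg < 1 / 2) (ha₁ : 0 < a₁) :
    ∃ c > (0 : ℝ), ∃ N₀ : ℝ, ∀ (n : ℕ) (N : ℝ), N₀ ≤ N →
      ∀ x : ℝ, a₁ * N ≤ x → x ≤ a₂ * N → x ≤ Real.sqrt n - N ^ εg →
        ∀ p q : Fin 2,
          |((Matrix.of fun p q : Fin 2 =>
                (1 / N) * ∑ i ∈ Finset.Icc 1 n,
                  (![fun i => bW N i x, fun i => cW N i x] p) i *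
                    (![fun i => bW N i x, fun i => cW N i x] q) i)
              - (1 : Matrix (Fin 2) (Fin 2) ℝ)) p q|
            ≤ Real.exp (-(N ^ c)) := by
  obtain ⟨N₀, hN₀⟩ := eventually_atTop.1 <| (eventually_ge_atTop 1).and <|
    (eventually_rpow_le_mul (ε := εg) (by linarith) ha₁).and
      (eventually_mul_sq_mul_exp_le_exp hε0 a₂)
  refine ⟨εg, hε0, N₀, fun n N hN x hx₁ hx₂ hxn p q => ?_⟩
  obtain ⟨hN₁, hsN, hexp⟩ := hN₀ N hN
  have hs : 1 ≤ N ^ εg := one_le_rpow hN₁ hε0.le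
  have hsx : N ^ εg ≤ x := hsN.trans hx₁
  have hx : 1 ≤ x := hs.trans hsx
  calc _ ≤ 5 * x ^ 2 * (poissonTail (x ^ 2) (n - 1) + exp (-x ^ 2)) :=
        abs_weylCov_sub_one_le (by linarith) hx n p q
    _ ≤ 5 * x ^ 2 * (exp (-((N ^ εg) ^ 2 / 4)) + exp (-x ^ 2)) := by
        gcongr
        exact poissonTail_sq_sub_one_le (by linarith) (by linarith) (by nlinarith) (by linarith)
    _ ≤ exp (-(N ^ εg)) :=
        mul_add_exp_neg_le_exp_neg (by nlinarith) (by nlinarith) hexp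

/-- The 2×2 covariance matrix `V_n(x)` is exponentially close to the identity. -/
theorem weyl_covariance_two_dim
    (εg a₁ a₂ : ℝ) (hε0 : 0 < εg) (hε : εg < 1 / 2) (ha₁ : 0 < a₁) (ha : a₁ < a₂) :
    ∃ c > (0 : ℝ), ∃ N₀ : ℝ, ∀ (n : ℕ) (N : ℝ), N₀ ≤ N →
      ∀ x : ℝ, a₁ * N ≤ x → x ≤ a₂ * N → x ≤ Real.sqrt n - N ^ εg →
        ∀ p q : Fin 2,
          |((Matrix.of fun p q : Fin 2 =>
                (1 / N) * ∑ i ∈ Finset.Icc 1 n,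
                  (![fun i => bW N i x, fun i => cW N i x] p) i *
                    (![fun i => bW N i x, fun i => cW N i x] q) i)
              - (1 : Matrix (Fin 2) (Fin 2) ℝ)) p q|
            ≤ Real.exp (-(N ^ c)) :=
  weyl_covariance_two_dim_general εg a₁ a₂ hε0 hε ha₁
end

section
/- Let n be an even positive integer and define v_i = 1 for even i and v_i = √2 for odd i, for 1 ≤ i ≤ n. There exists an absolute constant c > 0 such that for every real D with |D| ≥ 1 and every subset I ⊆ {1,…,n}: ∑_{i ∈ {1,…,n}∖I} ‖D·v_i‖²_{ℝ/ℤ} ≥ c·n/D² − |I|. In particular, for any τ ≥ 1 and any fixed bound k₀ on |I|, every real D with |D| ≥ 1 satisfying ∑_{i∉I} ‖D·v_i‖²_{ℝ/ℤ} ≤ τ for some I with |I| ≤ k₀ must satisfy D² ≥ c·n/(τ + k₀). -/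
/-!
Let `p, q` be the integers nearest to `D` and `D√2`. As `√2` is irrational, `2p² - q²` is a
nonzero integer, so `|√2 p - q| ≥ 1 / |√2 p + q| ≥ 1 / (5|D|)`. Since `√2 p - q` is a combination
of the errors `D - p` and `D√2 - q`, this gives `‖D‖² + ‖D√2‖² ≥ (2/225) / D²`. Summing over the
`n/2` pairs of consecutive indices, and losing at most `1` for each index of `I`, gives the bound.
-/

open Real

/-- Distance from a real number to the nearest integer. -/
noncomputable def distToInt (w : ℝ) : ℝ := |w - round w|

open Finset

theorem one_le_abs_sqrt_two_mul_sub_mul_add {p q : ℤ} (hp : p ≠ 0) :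
    1 ≤ |√2 * p - q| * |√2 * p + q| := by
  have hprod : (√2 * p - q) * (√2 * p + q) = ((2 * p ^ 2 - q ^ 2 : ℤ) : ℝ) := by
    push_cast
    linear_combination (p : ℝ) ^ 2 * sq_sqrt (zero_le_two : (0 : ℝ) ≤ 2)
  have hne : 2 * p ^ 2 - q ^ 2 ≠ 0 := by
    intro h
    have hpR : (p : ℝ) ≠ 0 := Int.cast_ne_zero.mpr hp
    rw [h, Int.cast_zero] at hprod
    rcases mul_eq_zero.1 hprod with h | h
    · exact irrational_sqrt_two.ne_rational q p (by field_simp; linarith)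
    · exact irrational_sqrt_two.ne_rational (-q) p (by field_simp; push_cast; linarith)
  rw [← abs_mul, hprod, ← Int.cast_abs]
  exact_mod_cast Int.one_le_abs hne

theorem round_ne_zero_of_one_le_abs {D : ℝ} (hD : 1 ≤ |D|) : round D ≠ 0 := by
  intro h
  have := abs_sub_round D
  rw [h, Int.cast_zero, sub_zero] at this
  linarith

theorem two_div_sq_le_distToInt_sq_add {D : ℝ} (hD : 1 ≤ |D|) :
    2 / 225 ≤ D ^ 2 * (distToInt D ^ 2 + distToInt (D * √2) ^ 2) := by
  set p := round D
  set q := round (D * √2)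
  set a := D - p with ha_def
  set b := D * √2 - q with hb_def
  have ha : |a| ≤ 1 / 2 := abs_sub_round D
  have hb : |b| ≤ 1 / 2 := abs_sub_round (D * √2)
  have hs0 : 0 ≤ √2 := sqrt_nonneg 2
  have hs : √2 ≤ 3 / 2 := by
    rw [sqrt_le_left (by norm_num)]; norm_num
  -- `√2 p - q = b - √2 a` is small, while `√2 p + q` is of size `O(|D|)`.
  have hminus : |√2 * p - q| ≤ 3 / 2 * (|a| + |b|) := by
    calc |√2 * p - q| = |b - √2 * a| := by rw [ha_def, hb_def]; ring_nf
      _ ≤ |b| + √2 * |a| := by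
          simpa [abs_mul, abs_of_nonneg hs0] using abs_sub b (√2 * a)
      _ ≤ 3 / 2 * (|a| + |b|) := by nlinarith [abs_nonneg a, abs_nonneg b]
  have hplus : |√2 * p + q| ≤ 5 * |D| := by
    calc |√2 * p + q| = |2 * √2 * D - (√2 * a + b)| := by rw [ha_def, hb_def]; ring_nf
      _ ≤ 2 * √2 * |D| + (√2 * |a| + |b|) := by
          have h1 := abs_sub (2 * √2 * D) (√2 * a + b)
          have h2 := abs_add_le (√2 * a) b
          simp only [abs_mul, abs_of_nonneg hs0, abs_two] at h1 h2
          linarith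
      _ ≤ 5 * |D| := by nlinarith [abs_nonneg a, abs_nonneg b]
  have key := one_le_abs_sqrt_two_mul_sub_mul_add (q := q) (round_ne_zero_of_one_le_abs hD)
  have hsum : 2 / 15 ≤ (|a| + |b|) * |D| := by
    nlinarith [abs_nonneg (√2 * p - q), abs_nonneg (√2 * p + q), abs_nonneg D]
  have hsq : (|a| + |b|) ^ 2 ≤ 2 * (a ^ 2 + b ^ 2) := by
    nlinarith [sq_abs a, sq_abs b, sq_nonneg (|a| - |b|)]
  calc 2 / 225 ≤ D ^ 2 * ((|a| + |b|) ^ 2 / 2) := by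
        nlinarith [sq_abs D, pow_le_pow_left₀ (by norm_num) hsum 2]
    _ ≤ D ^ 2 * (distToInt D ^ 2 + distToInt (D * √2) ^ 2) := by
        rw [distToInt, distToInt, sq_abs, sq_abs]
        gcongr
        linarith

theorem sum_Icc_two_mul_ite_even {M : Type*} [AddCommMonoid M] (A B : M) (m : ℕ) :
    ∑ i ∈ Icc 1 (2 * m), (if Even i then A else B) = m • (A + B) := by
  induction m with
  | zero => simp
  | succ m ih =>
    rw [show 2 * (m + 1) = 2 * m + 1 + 1 by ring, sum_Icc_succ_top (by omega),
      sum_Icc_succ_top (by omega), ih, if_neg (by simp [parity_simps]),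
      if_pos (by simp [parity_simps]), succ_nsmul, add_assoc, add_comm B A]

theorem Finset.sum_sub_card_le_sum_sdiff {ι : Type*} [DecidableEq ι] {s t : Finset ι}
    {f : ι → ℝ} (hts : t ⊆ s) (hf : ∀ i ∈ t, f i ≤ 1) :
    ∑ i ∈ s, f i - #t ≤ ∑ i ∈ s \ t, f i := by
  rw [sum_sdiff_eq_sub hts]
  have := sum_le_card_nsmul t f 1 hf
  simp only [nsmul_eq_mul, mul_one] at this
  linarith

theorem distToInt_sq_le_one (w : ℝ) : distToInt w ^ 2 ≤ 1 := by
  have h := abs_sub_round w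
  have h0 : 0 ≤ distToInt w := abs_nonneg _
  rw [← distToInt] at h
  nlinarith

theorem sum_sdiff_distToInt_sq_alternating_ge {n : ℕ} (hn : Even n) {D : ℝ} (hD : 1 ≤ |D|)
    {I : Finset ℕ} (hI : I ⊆ Icc 1 n) :
    1 / 225 * n / D ^ 2 - #I ≤
      ∑ i ∈ Icc 1 n \ I, distToInt (D * (if Even i then 1 else √2)) ^ 2 := by
  obtain ⟨m, rfl⟩ := hn
  have hD2 : 0 < D ^ 2 := one_pos.trans_le ((one_le_sq_iff_one_le_abs D).2 hD)
  have htotal : ∑ i ∈ Icc 1 (m + m), distToInt (D * (if Even i then 1 else √2)) ^ 2 =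
      m * (distToInt D ^ 2 + distToInt (D * √2) ^ 2) := by
    rw [← two_mul, ← nsmul_eq_mul, ← sum_Icc_two_mul_ite_even]
    refine sum_congr rfl fun i _ => ?_
    split_ifs <;> simp
  refine le_trans ?_ (sum_sub_card_le_sum_sdiff hI fun i _ => distToInt_sq_le_one _)
  rw [htotal, sub_le_sub_iff_right, div_le_iff₀ hD2]
  have := two_div_sq_le_distToInt_sq_add hD
  push_cast
  nlinarith [(m.cast_nonneg : (0 : ℝ) ≤ m)]

/-- Diophantine lower bound for the alternating sequence `1, √2, 1, √2, …`. -/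
theorem lcd_one_sqrt_two :
    ∃ c > (0 : ℝ), ∀ n : ℕ, Even n → 0 < n →
      (∀ D : ℝ, 1 ≤ |D| → ∀ I ⊆ Finset.Icc 1 n,
          c * n / D ^ 2 - I.card ≤
            ∑ i ∈ Finset.Icc 1 n \ I,
              distToInt (D * (if Even i then 1 else Real.sqrt 2)) ^ 2) ∧
      (∀ τ : ℝ, 1 ≤ τ → ∀ k₀ : ℕ, ∀ D : ℝ, 1 ≤ |D| →
          (∃ I ⊆ Finset.Icc 1 n, I.card ≤ k₀ ∧
              ∑ i ∈ Finset.Icc 1 n \ I,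
                distToInt (D * (if Even i then 1 else Real.sqrt 2)) ^ 2 ≤ τ) →
          c * n / (τ + k₀) ≤ D ^ 2) := by
  refine ⟨1 / 225, by norm_num, fun n hn _ =>
    ⟨fun D hD I hI => sum_sdiff_distToInt_sq_alternating_ge hn hD hI, ?_⟩⟩
  rintro τ hτ k₀ D hD ⟨I, hI, hIk, hsum⟩
  have hbound := (sum_sdiff_distToInt_sq_alternating_ge hn hD hI).trans hsum
  have hD2 : 0 < D ^ 2 := one_pos.trans_le ((one_le_sq_iff_one_le_abs D).2 hD)
  have hIk' : (#I : ℝ) ≤ k₀ := by exact_mod_cast hIk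
  rw [div_le_iff₀ (by positivity)]
  rw [sub_le_iff_le_add, div_le_iff₀ hD2] at hbound
  nlinarith
end

section
/- Fix 0 < ε < 1/2, 0 < σ* < 1/2, 0 < a₁ < a₂, and nonnegative integers α₁, α₂, α₃, α₄ with α₁ + α₂ > 0 and α₃ + α₄ > 0. There exist c > 0, K and n₀ such that for all integers n ≥ n₀, all reals N with n^{σ*} ≤ N, and all x, y with a₁·N ≤ x, y ≤ a₂·N and |x − y| ≥ N^{ε}: | ∑_{i=1}^n b_i(x)^{α₁}·c_i(x)^{α₂}·b_i(y)^{α₃}·c_i(y)^{α₄} | ≤ K·exp(−c·N^{ε/2}). -/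
/-!
With `λ = x²`, `b_i(x)² = N · e^{-λ} λ^i / i!` is `N` times a Poisson weight, and a Poisson weight
is at most `e^{-(√i - √λ)²}`; so `|b_i(x)| ≤ √N e^{-(√i - x)²/2}`, and `c_i = ((i - x²)/x) b_i`
only adds a polynomial factor. Every summand of the mixed sum is therefore a polynomial in `N`
(recall `i ≤ n ≤ N^{1/σ}`) times `e^{-(√i - x)²/2} e^{-(√i - y)²/2} ≤ e^{-(x - y)²/4} ≤ e^{-N^{2ε}/4}`,
and half of this Gaussian decay absorbs the polynomial and the number `n` of summands.
-/

open Real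

open Filter Topology Nat

theorem pow_mul_exp_neg_sq_div_factorial_le {t : ℝ} (ht : 0 ≤ t) (i : ℕ) :
    t ^ (2 * i) * exp (-t ^ 2) / i ! ≤ exp (-(√i - t) ^ 2) := by
  -- `t^{2i} / i! = (t² / i)^i · i^i / i!`: the first factor is bounded through `y ≤ e^{y - 1}`
  -- at `y = t / √i`, the second by `i^i / i! ≤ e^i`.
  rcases i.eq_zero_or_pos with rfl | hi
  · simp
  set s := √(i : ℝ)
  have hs : 0 < s := Real.sqrt_pos.2 (by exact_mod_cast hi)
  have hs2 : s ^ 2 = i := Real.sq_sqrt (Nat.cast_nonneg i)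
  have hy : (t / s) ^ 2 ≤ exp (2 * (t / s) - 2) := by
    have h := add_one_le_exp (t / s - 1)
    calc (t / s) ^ 2 ≤ exp (t / s - 1) ^ 2 := by gcongr; linarith
      _ = exp (2 * (t / s) - 2) := by rw [← exp_nat_mul]; ring_nf
  have hsplit : t ^ (2 * i) = ((t / s) ^ 2) ^ i * (i : ℝ) ^ i := by
    rw [← mul_pow, pow_mul, div_pow, ← hs2]
    field_simp
  calc t ^ (2 * i) * exp (-t ^ 2) / i !
      = ((t / s) ^ 2) ^ i * ((i : ℝ) ^ i / i !) * exp (-t ^ 2) := by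
        rw [hsplit]; ring
    _ ≤ exp (2 * (t / s) - 2) ^ i * exp i * exp (-t ^ 2) := by
        gcongr
        exact pow_div_factorial_le_exp _ (Nat.cast_nonneg i) i
    _ = exp (-(s - t) ^ 2) := by
        rw [← exp_nat_mul, ← exp_add, ← exp_add, ← hs2]
        congr 1
        field_simp
        ring

theorem abs_bW_le {N x : ℝ} (hN : 0 ≤ N) (hx : 0 ≤ x) (i : ℕ) :
    |bW N i x| ≤ √N * exp (-(√i - x) ^ 2 / 2) := by
  have hsq : bW N i x ^ 2 = N * (x ^ (2 * i) * exp (-x ^ 2) / i !) := by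
    rw [bW, div_pow, mul_pow, mul_pow, sq_sqrt hN, sq_sqrt (Nat.cast_nonneg _), ← exp_nat_mul,
      pow_mul, pow_right_comm]
    ring_nf
  calc |bW N i x| = √(bW N i x ^ 2) := (sqrt_sq_eq_abs _).symm
    _ ≤ √(N * exp (-(√i - x) ^ 2)) := by
        rw [hsq]
        gcongr
        exact pow_mul_exp_neg_sq_div_factorial_le hx i
    _ = √N * exp (-(√i - x) ^ 2 / 2) := by rw [sqrt_mul hN, exp_half]

theorem cW_eq_mul_bW (N : ℝ) (i : ℕ) (x : ℝ) : cW N i x = ((i - x ^ 2) / x) * bW N i x := by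
  rw [cW, bW]; ring

theorem abs_cW_le {N x : ℝ} (hN : 0 ≤ N) (hx : 0 < x) (i : ℕ) :
    |cW N i x| ≤ (i / x + x) * (√N * exp (-(√i - x) ^ 2 / 2)) := by
  rw [cW_eq_mul_bW, abs_mul]
  gcongr
  · rw [abs_div, abs_of_pos hx, div_le_iff₀ hx, add_mul, div_mul_cancel₀ _ hx.ne']
    calc |(i : ℝ) - x ^ 2| ≤ |(i : ℝ)| + |x ^ 2| := abs_sub _ _
      _ = i + x * x := by rw [abs_of_nonneg (by positivity), abs_of_nonneg (by positivity), sq]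
  · exact abs_bW_le hN hx.le i

theorem abs_bW_le_and_abs_cW_le {N x P : ℝ} {i : ℕ} (hN : 0 ≤ N) (hx : 0 < x)
    (hP : (1 + i / x + x) * √N ≤ P) :
    |bW N i x| ≤ P * exp (-(√i - x) ^ 2 / 2) ∧ |cW N i x| ≤ P * exp (-(√i - x) ^ 2 / 2) := by
  have hix : 0 ≤ (i : ℝ) / x + x := by positivity
  constructor
  · exact (abs_bW_le hN hx.le i).trans (by gcongr; nlinarith [sqrt_nonneg N])
  · refine (abs_cW_le hN hx i).trans ?_
    rw [← mul_assoc]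
    gcongr
    nlinarith [sqrt_nonneg N]

theorem abs_pow_mul_pow_le {b c P E : ℝ} {m k : ℕ} (hb : |b| ≤ P * E) (hc : |c| ≤ P * E)
    (hP : 0 ≤ P) (hE₀ : 0 ≤ E) (hE₁ : E ≤ 1) (hmk : 0 < m + k) :
    |b ^ m * c ^ k| ≤ P ^ (m + k) * E := by
  calc |b ^ m * c ^ k| = |b| ^ m * |c| ^ k := by rw [abs_mul, abs_pow, abs_pow]
    _ ≤ (P * E) ^ m * (P * E) ^ k := by gcongr
    _ = P ^ (m + k) * E ^ (m + k) := by ring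
    _ ≤ P ^ (m + k) * E := by gcongr; exact pow_le_of_le_one hE₀ hE₁ hmk.ne'

theorem exp_neg_sq_sub_mul_exp_neg_sq_sub_le (s x y : ℝ) :
    exp (-(s - x) ^ 2 / 2) * exp (-(s - y) ^ 2 / 2) ≤ exp (-(x - y) ^ 2 / 4) := by
  rw [← exp_add]
  gcongr
  nlinarith [sq_nonneg (2 * s - x - y)]

theorem abs_mixed_term_le {N x y P : ℝ} {i α₁ α₂ α₃ α₄ : ℕ} (hN : 0 ≤ N) (hx : 0 < x)
    (hy : 0 < y) (hPx : (1 + i / x + x) * √N ≤ P) (hPy : (1 + i / y + y) * √N ≤ P)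
    (h12 : 0 < α₁ + α₂) (h34 : 0 < α₃ + α₄) :
    |bW N i x ^ α₁ * cW N i x ^ α₂ * bW N i y ^ α₃ * cW N i y ^ α₄|
      ≤ P ^ (α₁ + α₂ + α₃ + α₄) * exp (-(x - y) ^ 2 / 4) := by
  have hP : 0 ≤ P := le_trans (by positivity) hPx
  have exp_le_one (z : ℝ) : exp (-(√i - z) ^ 2 / 2) ≤ 1 :=
    exp_le_one_iff.2 (by nlinarith [sq_nonneg (√i - z)])
  obtain ⟨hbx, hcx⟩ := abs_bW_le_and_abs_cW_le hN hx hPx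
  obtain ⟨hby, hcy⟩ := abs_bW_le_and_abs_cW_le hN hy hPy
  calc |bW N i x ^ α₁ * cW N i x ^ α₂ * bW N i y ^ α₃ * cW N i y ^ α₄|
      = |bW N i x ^ α₁ * cW N i x ^ α₂| * |bW N i y ^ α₃ * cW N i y ^ α₄| := by
        rw [mul_assoc _ (bW N i y ^ α₃), abs_mul]
    _ ≤ (P ^ (α₁ + α₂) * exp (-(√i - x) ^ 2 / 2)) *
          (P ^ (α₃ + α₄) * exp (-(√i - y) ^ 2 / 2)) := by
        gcongr
        · exact abs_pow_mul_pow_le hbx hcx hP (exp_nonneg _) (exp_le_one x) h12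
        · exact abs_pow_mul_pow_le hby hcy hP (exp_nonneg _) (exp_le_one y) h34
    _ = P ^ (α₁ + α₂ + α₃ + α₄) * (exp (-(√i - x) ^ 2 / 2) * exp (-(√i - y) ^ 2 / 2)) := by
        ring
    _ ≤ P ^ (α₁ + α₂ + α₃ + α₄) * exp (-(x - y) ^ 2 / 4) := by
        gcongr
        exact exp_neg_sq_sub_mul_exp_neg_sq_sub_le _ _ _

theorem one_add_div_add_mul_sqrt_le {a₁ a₂ N Q x : ℝ} {i : ℕ} (ha₁ : 0 < a₁) (hN : 1 ≤ N)
    (hNQ : N ≤ Q) (hiQ : i ≤ Q) (hx₁ : a₁ * N ≤ x) (hx₂ : x ≤ a₂ * N) :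
    (1 + i / x + x) * √N ≤ (1 + 1 / a₁ + a₂) * Q ^ 2 := by
  have hx : a₁ ≤ x := by nlinarith
  have hx₀ : 0 < x := by linarith
  have ha₂ : 0 ≤ a₂ := by nlinarith
  have hix : (i : ℝ) / x ≤ Q / a₁ := div_le_div₀ (by linarith) hiQ ha₁ hx
  have hsqrt : √N ≤ Q := (sqrt_le_left (by linarith)).2 (by nlinarith)
  have hfactor : 1 + i / x + x ≤ (1 + 1 / a₁ + a₂) * Q := by
    have : a₂ * N ≤ a₂ * Q := mul_le_mul_of_nonneg_left hNQ ha₂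
    have : (1 + 1 / a₁ + a₂) * Q = Q + Q / a₁ + a₂ * Q := by ring
    linarith
  calc (1 + i / x + x) * √N ≤ ((1 + 1 / a₁ + a₂) * Q) * Q :=
        mul_le_mul hfactor hsqrt (sqrt_nonneg N) (le_trans (by positivity) hfactor)
    _ = (1 + 1 / a₁ + a₂) * Q ^ 2 := by ring

theorem natCast_le_pow_ceil_inv {σ N : ℝ} {n : ℕ} (hσ : 0 < σ) (hN : 1 ≤ N)
    (hn : (n : ℝ) ^ σ ≤ N) :
    (n : ℝ) ≤ N ^ ⌈σ⁻¹⌉₊ := by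
  calc (n : ℝ) ≤ N ^ σ⁻¹ := (le_rpow_inv_iff_of_pos (by positivity) (by linarith) hσ).2 hn
    _ ≤ N ^ (⌈σ⁻¹⌉₊ : ℝ) := rpow_le_rpow_of_exponent_le hN (Nat.le_ceil _)
    _ = N ^ ⌈σ⁻¹⌉₊ := rpow_natCast N _

theorem tendsto_pow_mul_exp_neg_mul_rpow_atTop_nhds_zero (k : ℕ) {b δ : ℝ} (hb : 0 < b)
    (hδ : 0 < δ) : Tendsto (fun N : ℝ ↦ N ^ k * exp (-b * N ^ δ)) atTop (𝓝 0) := by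
  refine ((tendsto_rpow_mul_exp_neg_mul_atTop_nhds_zero (k / δ) b hb).comp
    (tendsto_rpow_atTop hδ)).congr' ?_
  filter_upwards [eventually_gt_atTop 0] with N hN
  rw [Function.comp_apply, ← rpow_mul hN.le, mul_div_cancel₀ _ hδ.ne', rpow_natCast]

theorem eventually_mul_pow_mul_exp_neg_le (B : ℝ) (k : ℕ) {δ : ℝ} (hδ : 0 < δ) :
    ∀ᶠ N : ℝ in atTop, B * N ^ k * exp (-N ^ δ / 4) ≤ exp (-(1 / 8) * N ^ δ) := by
  have h := ((tendsto_pow_mul_exp_neg_mul_rpow_atTop_nhds_zero k (by norm_num : (0:ℝ) < 1 / 8)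
    hδ).const_mul B).eventually_le_const (by norm_num : (B * 0 : ℝ) < 1)
  filter_upwards [h] with N hN
  have hsplit : exp (-N ^ δ / 4) = exp (-(1 / 8) * N ^ δ) * exp (-(1 / 8) * N ^ δ) := by
    rw [← exp_add]; ring_nf
  calc B * N ^ k * exp (-N ^ δ / 4)
      = B * (N ^ k * exp (-(1 / 8) * N ^ δ)) * exp (-(1 / 8) * N ^ δ) := by
        rw [hsplit]; ring
    _ ≤ 1 * exp (-(1 / 8) * N ^ δ) := by gcongr
    _ = exp (-(1 / 8) * N ^ δ) := one_mul _

theorem abs_mixed_sum_le {a₁ a₂ N Q x y : ℝ} {n α₁ α₂ α₃ α₄ : ℕ} (ha₁ : 0 < a₁) (hN : 1 ≤ N)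
    (hNQ : N ≤ Q) (hnQ : n ≤ Q) (hx₁ : a₁ * N ≤ x) (hx₂ : x ≤ a₂ * N) (hy₁ : a₁ * N ≤ y)
    (hy₂ : y ≤ a₂ * N) (h12 : 0 < α₁ + α₂) (h34 : 0 < α₃ + α₄) :
    |∑ i ∈ Finset.Icc 1 n, bW N i x ^ α₁ * cW N i x ^ α₂ * bW N i y ^ α₃ * cW N i y ^ α₄|
      ≤ n * (((1 + 1 / a₁ + a₂) * Q ^ 2) ^ (α₁ + α₂ + α₃ + α₄) * exp (-(x - y) ^ 2 / 4)) := by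
  refine (Finset.abs_sum_le_sum_abs _ _).trans ?_
  have hterm : ∀ i ∈ Finset.Icc 1 n,
      |bW N i x ^ α₁ * cW N i x ^ α₂ * bW N i y ^ α₃ * cW N i y ^ α₄|
        ≤ ((1 + 1 / a₁ + a₂) * Q ^ 2) ^ (α₁ + α₂ + α₃ + α₄) * exp (-(x - y) ^ 2 / 4) := by
    intro i hi
    have hiQ : (i : ℝ) ≤ Q := le_trans (by exact_mod_cast (Finset.mem_Icc.1 hi).2) hnQ
    exact abs_mixed_term_le (by linarith) (by nlinarith) (by nlinarith)
      (one_add_div_add_mul_sqrt_le ha₁ hN hNQ hiQ hx₁ hx₂)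
      (one_add_div_add_mul_sqrt_le ha₁ hN hNQ hiQ hy₁ hy₂) h12 h34
  simpa using Finset.sum_le_card_nsmul _ _ _ hterm

theorem weyl_mixed_sum_small_general
    (ε σs a₁ a₂ : ℝ) (hε0 : 0 < ε) (hσ0 : 0 < σs)
    (ha₁ : 0 < a₁)
    (α₁ α₂ α₃ α₄ : ℕ) (h12 : 0 < α₁ + α₂) (h34 : 0 < α₃ + α₄) :
    ∃ c > (0 : ℝ), ∃ K : ℝ, ∃ n₀ : ℕ, ∀ n ≥ n₀, ∀ N : ℝ, (n : ℝ) ^ σs ≤ N →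
      ∀ x y : ℝ, a₁ * N ≤ x → x ≤ a₂ * N → a₁ * N ≤ y → y ≤ a₂ * N →
        N ^ ε ≤ |x - y| →
        |∑ i ∈ Finset.Icc 1 n,
            bW N i x ^ α₁ * cW N i x ^ α₂ * bW N i y ^ α₃ * cW N i y ^ α₄|
          ≤ K * Real.exp (-c * N ^ (ε / 2)) := by
  set q := ⌈σs⁻¹⌉₊
  set A := α₁ + α₂ + α₃ + α₄
  set B := 1 + 1 / a₁ + a₂
  obtain ⟨T, hT⟩ := eventually_atTop.1 ((eventually_mul_pow_mul_exp_neg_le (B ^ A)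
    (q * (2 * A + 1)) (by positivity : 0 < 2 * ε)).and (eventually_ge_atTop 1))
  obtain ⟨n₀, hn₀⟩ := eventually_atTop.1
    (((tendsto_rpow_atTop hσ0).comp tendsto_natCast_atTop_atTop).eventually_ge_atTop T)
  refine ⟨1 / 8, by norm_num, 1, n₀, fun n hn N hnN x y hx₁ hx₂ hy₁ hy₂ hxy ↦ ?_⟩
  obtain ⟨hdecay, hN⟩ := hT N ((hn₀ n hn).trans hnN)
  have hnQ : (n : ℝ) ≤ N ^ q := natCast_le_pow_ceil_inv hσ0 hN hnN
  have hNQ : N ≤ N ^ q := le_self_pow₀ hN (Nat.ceil_pos.2 (inv_pos.2 hσ0)).ne'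
  have hB : 0 ≤ B := by
    have : 0 < a₂ := by nlinarith
    positivity
  have hsep : N ^ (2 * ε) ≤ (x - y) ^ 2 := by
    rw [mul_comm, rpow_mul (by linarith), rpow_two, ← sq_abs (x - y)]
    gcongr
  calc |∑ i ∈ Finset.Icc 1 n, bW N i x ^ α₁ * cW N i x ^ α₂ * bW N i y ^ α₃ * cW N i y ^ α₄|
      ≤ n * ((B * (N ^ q) ^ 2) ^ A * exp (-(x - y) ^ 2 / 4)) :=
        abs_mixed_sum_le ha₁ hN hNQ hnQ hx₁ hx₂ hy₁ hy₂ h12 h34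
    _ ≤ N ^ q * ((B * (N ^ q) ^ 2) ^ A * exp (-N ^ (2 * ε) / 4)) := by gcongr
    _ = B ^ A * N ^ (q * (2 * A + 1)) * exp (-N ^ (2 * ε) / 4) := by
        rw [pow_mul N q, pow_succ (N ^ q) (2 * A), pow_mul (N ^ q) 2 A, mul_pow]
        ring
    _ ≤ exp (-(1 / 8) * N ^ (2 * ε)) := hdecay
    _ ≤ 1 * exp (-(1 / 8) * N ^ (ε / 2)) := by
        rw [one_mul, exp_le_exp]
        linarith [rpow_le_rpow_of_exponent_le hN (by linarith : ε / 2 ≤ 2 * ε)]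

/-- Exponential smallness of mixed sums `∑_i b_i(x)^{α₁} c_i(x)^{α₂} b_i(y)^{α₃} c_i(y)^{α₄}`
for well separated `x, y`. -/
theorem weyl_mixed_sum_small
    (ε σs a₁ a₂ : ℝ) (hε0 : 0 < ε) (hε : ε < 1 / 2) (hσ0 : 0 < σs) (hσ : σs < 1 / 2)
    (ha₁ : 0 < a₁) (ha : a₁ < a₂)
    (α₁ α₂ α₃ α₄ : ℕ) (h12 : 0 < α₁ + α₂) (h34 : 0 < α₃ + α₄) :
    ∃ c > (0 : ℝ), ∃ K : ℝ, ∃ n₀ : ℕ, ∀ n ≥ n₀, ∀ N : ℝ, (n : ℝ) ^ σs ≤ N →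
      ∀ x y : ℝ, a₁ * N ≤ x → x ≤ a₂ * N → a₁ * N ≤ y → y ≤ a₂ * N →
        N ^ ε ≤ |x - y| →
        |∑ i ∈ Finset.Icc 1 n,
            bW N i x ^ α₁ * cW N i x ^ α₂ * bW N i y ^ α₃ * cW N i y ^ α₄|
          ≤ K * Real.exp (-c * N ^ (ε / 2)) :=
  weyl_mixed_sum_small_general ε σs a₁ a₂ hε0 hσ0 ha₁ α₁ α₂ α₃ α₄ h12 h34
end
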